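/- For any graph G on n vertices with complement Ḡ, and any k, the Laplacian matrices L_k of F_k(G) and L̄_k of F_k(Ḡ) commute: L_k·L̄_k = L̄_k·L_k. -/

import Mathlib

open Finset

/-- The `k`-token graph of `G`: vertices are the `k`-subsets of `V`, two being adjacent
iff their symmetric difference is a pair `{a,b}` with `a ∈ A`, `b ∈ B`, `G.Adj a b`. -/
def tokenGraph {V : Type*} [DecidableEq V] (G : SimpleGraph V) (k : ℕ) :
    SimpleGraph {s : Finset V // s.card = k} where
  Adj A B := ∃ a b, a ∈ A.1 ∧ b ∈ B.1 ∧ G.Adj a b ∧ symmDiff A.1 B.1 = {a, b}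
  symm := by
    constructor
    rintro A B ⟨a, b, ha, hb, hab, hd⟩
    exact ⟨b, a, hb, ha, hab.symm, by rw [symmDiff_comm, hd, Finset.pair_comm]⟩
  loopless := by
    constructor
    rintro A ⟨a, b, ha, hb, hab, hd⟩
    rw [symmDiff_self] at hd
    exact (Finset.insert_ne_empty a {b}) hd.symm

noncomputable instance tokenGraph.instDecidableRelAdj {V : Type*} [DecidableEq V]
    (G : SimpleGraph V) (k : ℕ) : DecidableRel (tokenGraph G k).Adj :=
  Classical.decRel _

/-- The `(n,k)`-binomial matrix: rows are characteristic vectors of the `k`-subsets. -/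
def binMatrix (V : Type*) [DecidableEq V] (k : ℕ) :
    Matrix {s : Finset V // s.card = k} V ℝ :=
  fun A j => if j ∈ A.1 then 1 else 0

/-!
Write `Pₑ` for the permutation matrix by which the transposition of the endpoints of an edge `e`
acts on `k`-subsets. Then `L(F_k(G)) = ∑_{e ∈ E(G)} (1 - Pₑ)`: off the diagonal both sides
count the edges whose transposition carries one `k`-subset to the other, and both have zero row
sums. Each transposition is an automorphism of `F_k(Kₙ)`, so every `Pₑ`, and hence `L_k`,
commutes with `L(F_k(Kₙ)) = L_k + L̄_k`.
-/

open Equiv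
open scoped Matrix

theorem Matrix.ext_of_apply_ne_of_mulVec_const {n R : Type*} [Fintype n] [DecidableEq n]
    [Ring R] {X Y : Matrix n n R} (hoff : ∀ i j, i ≠ j → X i j = Y i j)
    (hrow : X *ᵥ (fun _ => 1) = Y *ᵥ (fun _ => 1)) : X = Y := by
  ext i j
  obtain rfl | hij := eq_or_ne i j
  · have hi := congrFun hrow i
    simp only [Matrix.mulVec, dotProduct, mul_one] at hi
    rwa [← add_sum_erase _ _ (mem_univ i), ← add_sum_erase _ _ (mem_univ i),
      sum_congr rfl fun j hj => hoff i j (ne_of_mem_erase hj).symm, add_left_inj] at hi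
  · exact hoff i j hij

namespace SimpleGraph

variable {V W R : Type*} [Fintype V] [Fintype W] [DecidableEq V] [DecidableEq W]
  {G : SimpleGraph V} {H : SimpleGraph W} [DecidableRel G.Adj] [DecidableRel H.Adj]

theorem Iso.lapMatrix_apply [AddGroupWithOne R] (φ : G ≃g H) (v w : V) :
    H.lapMatrix R (φ v) (φ w) = G.lapMatrix R v w := by
  simp [lapMatrix, degMatrix, Matrix.diagonal_apply, adjMatrix_apply, φ.map_adj_iff]

theorem Iso.commute_permMatrix_lapMatrix [Ring R] (φ : H ≃g H) :
    Commute (Perm.permMatrix R (φ : W ≃ W)) (H.lapMatrix R) := by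
  rw [Commute, SemiconjBy, PEquiv.toMatrix_toPEquiv_mul, PEquiv.mul_toMatrix_toPEquiv]
  ext v w
  have h := φ.lapMatrix_apply (R := R) v (φ.symm w)
  rw [φ.apply_symm_apply] at h
  exact h

end SimpleGraph

theorem Finset.map_symmDiff {V W : Type*} [DecidableEq V] [DecidableEq W] (f : V ↪ W)
    (A C : Finset V) : (symmDiff A C).map f = symmDiff (A.map f) (C.map f) := by
  simp only [map_eq_image, image_symmDiff _ _ f.injective]

theorem Finset.symmDiff_map_swap {V : Type*} [DecidableEq V] (A : Finset V) (a b : V) :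
    symmDiff A (A.map (swap a b).toEmbedding) = if (a ∈ A ↔ b ∈ A) then ∅ else {a, b} := by
  ext x
  rw [mem_symmDiff, mem_map_equiv, symm_swap, swap_apply_def]
  split_ifs <;> simp_all <;> grind

def Equiv.tokenCongr {V W : Type*} (e : V ≃ W) (k : ℕ) :
    {s : Finset V // s.card = k} ≃ {s : Finset W // s.card = k} :=
  e.finsetCongr.subtypeEquiv fun s => by simp

theorem Equiv.coe_tokenCongr_apply {V W : Type*} (e : V ≃ W) (k : ℕ)
    (A : {s : Finset V // s.card = k}) :
    (e.tokenCongr k A : Finset W) = A.1.map e.toEmbedding := rfl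

def SimpleGraph.Iso.tokenGraph {V W : Type*} [DecidableEq V] [DecidableEq W]
    {G : SimpleGraph V} {H : SimpleGraph W} (φ : G ≃g H) (k : ℕ) :
    tokenGraph G k ≃g tokenGraph H k where
  toEquiv := (φ : V ≃ W).tokenCongr k
  map_rel_iff' {A C} := by
    simp only [_root_.tokenGraph, Equiv.coe_tokenCongr_apply, ← Finset.map_symmDiff]
    constructor
    · rintro ⟨_, _, hφa, hφb, hab, hd⟩
      obtain ⟨a, ha, rfl⟩ := mem_map.mp hφa
      obtain ⟨b, hb, rfl⟩ := mem_map.mp hφb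
      refine ⟨a, b, ha, hb, φ.map_adj_iff.mp hab, Finset.map_injective (φ : V ≃ W).toEmbedding ?_⟩
      simpa using hd
    · rintro ⟨a, b, ha, hb, hab, hd⟩
      exact ⟨φ a, φ b, mem_map_of_mem _ ha, mem_map_of_mem _ hb, φ.map_adj_iff.mpr hab,
        by simp [hd]⟩

def Sym2.transposition {V : Type*} [DecidableEq V] (e : Sym2 V) : Perm V :=
  Sym2.lift ⟨swap, swap_comm⟩ e

@[simp]
theorem Sym2.transposition_mk {V : Type*} [DecidableEq V] (a b : V) :
    s(a, b).transposition = swap a b := rfl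

section TokenGraph

variable {V : Type*} [DecidableEq V] {G : SimpleGraph V} {k : ℕ}
  {A C : {s : Finset V // s.card = k}}

theorem tokenGraph_adj_iff_exists_transposition :
    (tokenGraph G k).Adj A C ↔ A ≠ C ∧ ∃ e ∈ G.edgeSet, e.transposition.tokenCongr k A = C := by
  simp only [tokenGraph, ← Subtype.val_inj (a := (tokenCongr _ k) A), coe_tokenCongr_apply]
  constructor
  · rintro ⟨a, b, ha, hb, hab, hd⟩
    have hbA : b ∉ A.1 := by
      have := hd ▸ mem_insert_of_mem (mem_singleton_self b)
      rw [mem_symmDiff] at this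
      tauto
    have hswap : symmDiff A.1 (A.1.map (swap a b).toEmbedding) = {a, b} := by
      rw [symmDiff_map_swap, if_neg (by simp [ha, hbA])]
    refine ⟨fun h => ?_, s(a, b), hab, symmDiff_right_injective A.1 (hswap.trans hd.symm)⟩
    rw [h, symmDiff_self] at hd
    exact insert_ne_empty a {b} hd.symm
  · rintro ⟨hAC, e, he, hσ⟩
    induction e using Sym2.ind with | h a b => ?_
    have hd := symmDiff_map_swap A.1 a b
    rw [Sym2.transposition_mk] at hσ
    rw [hσ] at hd
    split_ifs at hd with hab
    · exact absurd (Subtype.ext (symmDiff_eq_bot.mp hd)) hAC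
    · have hmem : ∀ x, (x ∈ A.1 ∧ x ∉ C.1 ∨ x ∈ C.1 ∧ x ∉ A.1) ↔ x = a ∨ x = b := fun x => by
        rw [← mem_symmDiff, hd, mem_insert, mem_singleton]
      by_cases ha : a ∈ A.1
      · have hbC : b ∈ C.1 := by have := hmem b; tauto
        exact ⟨a, b, ha, hbC, he, hd⟩
      · have hb : b ∈ A.1 := by tauto
        have haC : a ∈ C.1 := by have := hmem a; tauto
        exact ⟨b, a, hb, haC, G.adj_symm he, hd.trans (pair_comm a b)⟩

theorem mem_symmDiff_tokenCongr_transposition {e : Sym2 V}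
    (he : e.transposition.tokenCongr k A ≠ A) (x : V) :
    x ∈ symmDiff A.1 (e.transposition.tokenCongr k A).1 ↔ x ∈ e := by
  induction e using Sym2.ind with | h a b => ?_
  rw [ne_eq, ← Subtype.val_inj, Sym2.transposition_mk, coe_tokenCongr_apply] at he
  rw [Sym2.transposition_mk, coe_tokenCongr_apply, symmDiff_map_swap]
  split_ifs with hab
  · exact absurd (symmDiff_eq_bot.mp (symmDiff_map_swap A.1 a b ▸ if_pos hab)).symm he
  · simp

theorem eq_of_tokenCongr_transposition_eq (hAC : A ≠ C) {e f : Sym2 V}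
    (he : e.transposition.tokenCongr k A = C) (hf : f.transposition.tokenCongr k A = C) :
    e = f :=
  Sym2.ext fun x => by
    rw [← mem_symmDiff_tokenCongr_transposition (he ▸ hAC.symm),
      ← mem_symmDiff_tokenCongr_transposition (hf ▸ hAC.symm), he, hf]

theorem card_filter_tokenCongr_transposition_eq [Fintype V] [Fintype G.edgeSet] (hAC : A ≠ C) :
    #{e ∈ G.edgeFinset | e.transposition.tokenCongr k A = C} =
      if (tokenGraph G k).Adj A C then 1 else 0 := by
  split_ifs with hadj
  · obtain ⟨-, e, he, hσ⟩ := tokenGraph_adj_iff_exists_transposition.mp hadj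
    refine card_eq_one.mpr ⟨e, eq_singleton_iff_unique_mem.mpr ⟨?_, fun f hf => ?_⟩⟩
    · exact mem_filter.mpr ⟨G.mem_edgeFinset.mpr he, hσ⟩
    · exact eq_of_tokenCongr_transposition_eq hAC (mem_filter.mp hf).2 hσ
  · refine card_eq_zero.mpr (filter_eq_empty_iff.mpr fun e he hσ => hadj ?_)
    exact tokenGraph_adj_iff_exists_transposition.mpr ⟨hAC, e, G.mem_edgeFinset.mp he, hσ⟩

end TokenGraph

section Laplacian

variable {V R : Type*} [Fintype V] [DecidableEq V] [Ring R] (G : SimpleGraph V) (k : ℕ)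

theorem lapMatrix_tokenGraph_eq_sum [Fintype G.edgeSet] :
    (tokenGraph G k).lapMatrix R =
      ∑ e ∈ G.edgeFinset, (1 - Perm.permMatrix R (e.transposition.tokenCongr k)) := by
  refine Matrix.ext_of_apply_ne_of_mulVec_const (fun A C hAC => ?_) ?_
  · simp only [SimpleGraph.lapMatrix, SimpleGraph.degMatrix, Matrix.sub_apply, ne_eq, hAC,
      not_false_eq_true, Matrix.diagonal_apply_ne, SimpleGraph.adjMatrix_apply, zero_sub,
      Matrix.sum_apply, Matrix.one_apply_ne hAC, PEquiv.toMatrix_apply, toPEquiv_apply,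
      Option.mem_def, Option.some.injEq, sum_neg_distrib, sum_boole, neg_inj]
    rw [card_filter_tokenCongr_transposition_eq (G := G) hAC, Nat.cast_ite, Nat.cast_one, Nat.cast_zero]
  · rw [SimpleGraph.lapMatrix_mulVec_const_eq_zero, Matrix.sum_mulVec]
    refine (sum_eq_zero fun e _ => ?_).symm
    rw [Matrix.sub_mulVec, Matrix.one_mulVec, PEquiv.toMatrix_toPEquiv_mulVec]
    exact sub_self _

theorem lapMatrix_tokenGraph_add_compl :
    (tokenGraph G k).lapMatrix R + (tokenGraph Gᶜ k).lapMatrix R =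
      (tokenGraph ⊤ k).lapMatrix R := by
  classical
  simp only [lapMatrix_tokenGraph_eq_sum]
  rw [← sum_union (G.disjoint_edgeFinset.mpr disjoint_compl_right)]
  congr 1
  ext e
  rw [mem_union, SimpleGraph.mem_edgeFinset, SimpleGraph.mem_edgeFinset,
    SimpleGraph.mem_edgeFinset, ← Set.mem_union, ← SimpleGraph.edgeSet_sup, sup_compl_eq_top]

theorem commute_lapMatrix_tokenGraph_top :
    Commute ((tokenGraph G k).lapMatrix R) ((tokenGraph ⊤ k).lapMatrix R) := by
  classical
  rw [lapMatrix_tokenGraph_eq_sum]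
  exact Commute.sum_left _ _ _ fun e _ => (Commute.one_left _).sub_left
    ((SimpleGraph.Iso.completeGraph e.transposition).tokenGraph k).commute_permMatrix_lapMatrix

end Laplacian

theorem token_lap_commute_compl {V : Type*} [Fintype V] [DecidableEq V]
    (G : SimpleGraph V) (k : ℕ) :
    (tokenGraph G k).lapMatrix ℝ * (tokenGraph Gᶜ k).lapMatrix ℝ =
      (tokenGraph Gᶜ k).lapMatrix ℝ * (tokenGraph G k).lapMatrix ℝ := by
  have h := commute_lapMatrix_tokenGraph_top (R := ℝ) G k
  rw [← lapMatrix_tokenGraph_add_compl G k] at h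
  simpa using (h.sub_right (Commute.refl _)).eq
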